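/- Let L̂ be the complex subspace of (V_ℂ×ℂ^{h+2k}) ⊕ (V*_ℂ×ℂ^{h+2k}) obtained from a complex maximally isotropic L ⊆ (V_ℂ×ℂʰ)⊕(V*_ℂ×ℂʰ) with L ∩ L̄ = 0 by L̂ = {(X,u,w−√−1 J₀w) ⊕ (α,v,s−√−1 J₀s) : (X,u)⊕(α,v) ∈ L, w,s ∈ ℝ²ᵏ}, where J₀ is the standard complex structure on ℝ²ᵏ. Then L̂ is maximally isotropic of complex dimension dim V + h + 2k and satisfies L̂ ∩ conj(L̂) = 0. -/

import Mathlib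

open scoped BigOperators
open Complex

/-- The complex-bilinear neutral pairing on `(V_ℂ×ℂʰ) ⊕ (V*_ℂ×ℂʰ)`, with
`V_ℂ = ℂⁿ` and the dual identified with `ℂⁿ` via coordinates. -/
noncomputable def cPairingH (n h : ℕ)
    (p q : ((Fin n → ℂ) × (Fin h → ℂ)) × ((Fin n → ℂ) × (Fin h → ℂ))) : ℂ :=
  (1 / 2) * (∑ i, q.2.1 i * p.1.1 i + ∑ i, p.2.1 i * q.1.1 i +
    ∑ a, p.1.2 a * q.2.2 a + ∑ a, q.1.2 a * p.2.2 a)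

/-- Conjugation on the index-`h` stable big space. -/
def cConjH (n h : ℕ)
    (p : ((Fin n → ℂ) × (Fin h → ℂ)) × ((Fin n → ℂ) × (Fin h → ℂ))) :
    ((Fin n → ℂ) × (Fin h → ℂ)) × ((Fin n → ℂ) × (Fin h → ℂ)) :=
  ((fun i => starRingEnd ℂ (p.1.1 i), fun a => starRingEnd ℂ (p.1.2 a)),
   (fun i => starRingEnd ℂ (p.2.1 i), fun a => starRingEnd ℂ (p.2.2 a)))

/-- The complex-bilinear neutral pairing on the stable big space of index
`h + 2k`, with `ℂ^{h+2k}` modelled by `(Fin h → ℂ) × ((Fin k → ℂ) × (Fin k → ℂ))`,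
the last two factors corresponding to the basis `(e_p, f_p)` of `ℝ²ᵏ`. -/
noncomputable def cPairingBig (n h k : ℕ)
    (p q : ((Fin n → ℂ) × ((Fin h → ℂ) × ((Fin k → ℂ) × (Fin k → ℂ)))) ×
      ((Fin n → ℂ) × ((Fin h → ℂ) × ((Fin k → ℂ) × (Fin k → ℂ))))) : ℂ :=
  (1 / 2) * (∑ i, q.2.1 i * p.1.1 i + ∑ i, p.2.1 i * q.1.1 i +
    (∑ a, p.1.2.1 a * q.2.2.1 a + ∑ j, p.1.2.2.1 j * q.2.2.2.1 j +
      ∑ j, p.1.2.2.2 j * q.2.2.2.2 j) +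
    (∑ a, q.1.2.1 a * p.2.2.1 a + ∑ j, q.1.2.2.1 j * p.2.2.2.1 j +
      ∑ j, q.1.2.2.2 j * p.2.2.2.2 j))

/-- Conjugation on the index-`h + 2k` stable big space. -/
def cConjBig (n h k : ℕ)
    (p : ((Fin n → ℂ) × ((Fin h → ℂ) × ((Fin k → ℂ) × (Fin k → ℂ)))) ×
      ((Fin n → ℂ) × ((Fin h → ℂ) × ((Fin k → ℂ) × (Fin k → ℂ))))) :
    ((Fin n → ℂ) × ((Fin h → ℂ) × ((Fin k → ℂ) × (Fin k → ℂ)))) ×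
      ((Fin n → ℂ) × ((Fin h → ℂ) × ((Fin k → ℂ) × (Fin k → ℂ)))) :=
  ((fun i => starRingEnd ℂ (p.1.1 i),
     (fun a => starRingEnd ℂ (p.1.2.1 a),
      (fun j => starRingEnd ℂ (p.1.2.2.1 j),
       fun j => starRingEnd ℂ (p.1.2.2.2 j)))),
   (fun i => starRingEnd ℂ (p.2.1 i),
     (fun a => starRingEnd ℂ (p.2.2.1 a),
      (fun j => starRingEnd ℂ (p.2.2.2.1 j),
       fun j => starRingEnd ℂ (p.2.2.2.2 j)))))

/-! Writing `w = (w₁, w₂)` and `a = w₁ + i w₂`, one has `w − √−1 J₀w = (a, −i a)`, and `a` ranges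
over all of `ℂᵏ`; so `L̂` is the image of `L × ℂᵏ × ℂᵏ` under an injective linear map, which gives
its dimension. The new coordinates pair to zero because `a b + (−i a)(−i b) = 0`, and conjugation
sends `(a, −i a)` to `(ā, i ā)`, which is of the form `(c, −i c)` only for `a = 0`; hence isotropy
and `L̂ ∩ conj L̂ = 0` reduce to the same properties of `L`. -/

open ComplexConjugate

theorem sum_mul_add_sum_neg_I_smul_mul {ι : Type*} [Fintype ι] (a b : ι → ℂ) :
    ∑ j, a j * b j + ∑ j, (-I • a) j * (-I • b) j = 0 := by
  rw [← Finset.sum_add_distrib]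
  refine Finset.sum_eq_zero fun j _ => ?_
  simp only [Pi.smul_apply, smul_eq_mul]
  linear_combination a j * b j * I_sq

theorem eq_zero_of_conj_eq_of_conj_neg_I_mul_eq {a c : ℂ} (h₁ : conj a = c)
    (h₂ : conj (-I * a) = -I * c) : a = 0 := by
  subst h₁
  simp only [map_mul, map_neg, conj_I, neg_neg] at h₂
  have h : 2 * I * conj a = 0 := by linear_combination h₂
  simpa [I_ne_zero] using h

theorem neg_I_smul_ofReal_add_I_mul {ι : Type*} (w₁ w₂ : ι → ℝ) :
    -I • (fun j => (w₁ j : ℂ) + I * w₂ j) = fun j => (w₂ j : ℂ) - I * w₁ j := by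
  funext j
  simp only [Pi.smul_apply, smul_eq_mul]
  linear_combination -(w₂ j : ℂ) * I_sq

theorem ofReal_re_add_I_mul_ofReal_im {ι : Type*} (a : ι → ℂ) :
    (fun j => ((a j).re : ℂ) + I * (a j).im) = a := by
  funext j
  rw [mul_comm, re_add_im]

abbrev SpaceH (n h : ℕ) : Type :=
  ((Fin n → ℂ) × (Fin h → ℂ)) × ((Fin n → ℂ) × (Fin h → ℂ))

abbrev SpaceBig (n h k : ℕ) : Type :=
  ((Fin n → ℂ) × ((Fin h → ℂ) × ((Fin k → ℂ) × (Fin k → ℂ)))) ×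
    ((Fin n → ℂ) × ((Fin h → ℂ) × ((Fin k → ℂ) × (Fin k → ℂ))))

def prolong (n h k : ℕ) : SpaceH n h × ((Fin k → ℂ) × (Fin k → ℂ)) →ₗ[ℂ] SpaceBig n h k where
  toFun y := ((y.1.1.1, y.1.1.2, y.2.1, -I • y.2.1), (y.1.2.1, y.1.2.2, y.2.2, -I • y.2.2))
  map_add' x y := by simp only [Prod.fst_add, Prod.snd_add, smul_add, Prod.mk_add_mk]
  map_smul' c x := by
    simp only [Prod.smul_fst, Prod.smul_snd, smul_comm (-I) c, RingHom.id_apply, Prod.smul_mk]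

section Prolong

variable {n h k : ℕ}

theorem prolong_apply (x : SpaceH n h) (a b : Fin k → ℂ) :
    prolong n h k (x, a, b) = ((x.1.1, x.1.2, a, -I • a), (x.2.1, x.2.2, b, -I • b)) := rfl

theorem prolong_injective : Function.Injective (prolong n h k) := by
  rintro ⟨x, a, b⟩ ⟨y, c, d⟩ hxy
  simp only [prolong_apply, Prod.mk.injEq] at hxy
  obtain ⟨⟨h₁, h₂, h₃, -⟩, h₄, h₅, h₆, -⟩ := hxy
  ext <;> simp_all

theorem cPairingBig_prolong (x y : SpaceH n h) (a b c d : Fin k → ℂ) :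
    cPairingBig n h k (prolong n h k (x, a, b)) (prolong n h k (y, c, d)) =
      cPairingH n h x y := by
  simp only [cPairingBig, cPairingH, prolong_apply]
  linear_combination (1 / 2 : ℂ) * sum_mul_add_sum_neg_I_smul_mul a d +
    (1 / 2 : ℂ) * sum_mul_add_sum_neg_I_smul_mul c b

theorem eq_zero_of_cConjBig_prolong_eq (x y : SpaceH n h) (a b c d : Fin k → ℂ)
    (hxy : cConjBig n h k (prolong n h k (x, a, b)) = prolong n h k (y, c, d)) :
    cConjH n h x = y ∧ a = 0 ∧ b = 0 := by
  simp only [cConjBig, prolong_apply, Prod.mk.injEq, funext_iff, Pi.smul_apply,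
    smul_eq_mul] at hxy
  obtain ⟨⟨h₁, h₂, h₃, h₄⟩, h₅, h₆, h₇, h₈⟩ := hxy
  refine ⟨?_, funext fun j => eq_zero_of_conj_eq_of_conj_neg_I_mul_eq (h₃ j) (h₄ j),
    funext fun j => eq_zero_of_conj_eq_of_conj_neg_I_mul_eq (h₇ j) (h₈ j)⟩
  ext <;> simp_all [cConjH]

def prolongOn (L : Submodule ℂ (SpaceH n h)) :
    L × ((Fin k → ℂ) × (Fin k → ℂ)) →ₗ[ℂ] SpaceBig n h k :=
  (prolong n h k).comp (L.subtype.prodMap LinearMap.id)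

theorem prolongOn_apply (L : Submodule ℂ (SpaceH n h)) (x : L) (a b : Fin k → ℂ) :
    prolongOn L (x, a, b) = prolong n h k (x, a, b) := rfl

theorem prolongOn_injective (L : Submodule ℂ (SpaceH n h)) :
    Function.Injective (prolongOn (k := k) L) :=
  prolong_injective.comp (Subtype.val_injective.prodMap Function.injective_id)

theorem finrank_range_prolongOn (L : Submodule ℂ (SpaceH n h)) :
    Module.finrank ℂ (LinearMap.range (prolongOn (k := k) L)) = Module.finrank ℂ L + 2 * k := by
  rw [LinearMap.finrank_range_of_inj (prolongOn_injective L), Module.finrank_prod,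
    Module.finrank_prod, Module.finrank_fin_fun]
  ring

theorem mem_range_prolongOn_iff (L : Submodule ℂ (SpaceH n h)) (p : SpaceBig n h k) :
    p ∈ LinearMap.range (prolongOn L) ↔ ∃ (X : Fin n → ℂ) (u : Fin h → ℂ)
      (α : Fin n → ℂ) (v : Fin h → ℂ) (w1 w2 s1 s2 : Fin k → ℝ),
        ((X, u), (α, v)) ∈ L ∧
        p = ((X, (u, (fun j => (w1 j : ℂ) + I * w2 j, fun j => (w2 j : ℂ) - I * w1 j))),
             (α, (v, (fun j => (s1 j : ℂ) + I * s2 j, fun j => (s2 j : ℂ) - I * s1 j)))) := by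
  simp only [← neg_I_smul_ofReal_add_I_mul]
  constructor
  · rintro ⟨⟨⟨x, hx⟩, a, b⟩, rfl⟩
    refine ⟨x.1.1, x.1.2, x.2.1, x.2.2, fun j => (a j).re, fun j => (a j).im,
      fun j => (b j).re, fun j => (b j).im, hx, ?_⟩
    simp only [ofReal_re_add_I_mul_ofReal_im]
    rfl
  · rintro ⟨X, u, α, v, w1, w2, s1, s2, hx, rfl⟩
    exact ⟨(⟨((X, u), (α, v)), hx⟩, _, _), rfl⟩

end Prolong

/-- Prolongation of a generalized complex structure by the standard complex
structure `J₀` of `ℝ²ᵏ` (`J₀e_p = f_p`, `J₀f_p = −e_p`): if `L` is maximally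
isotropic of index `h` with `L ∩ L̄ = 0`, then
`L̂ = {(X,u,w−√−1 J₀w) ⊕ (α,v,s−√−1 J₀s) : (X,u)⊕(α,v) ∈ L, w,s ∈ ℝ²ᵏ}`
is maximally isotropic of complex dimension `n + h + 2k` with
`L̂ ∩ conj(L̂) = 0`.  Here `w = (w₁,w₂) ∈ ℝᵏ × ℝᵏ` and
`w − √−1 J₀w = (w₁ + i w₂, w₂ − i w₁)`. -/
theorem stmt17 (n h k : ℕ)
    (L : Submodule ℂ (((Fin n → ℂ) × (Fin h → ℂ)) ×
      ((Fin n → ℂ) × (Fin h → ℂ))))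
    (hiso : ∀ p ∈ L, ∀ q ∈ L, cPairingH n h p q = 0)
    (hrank : Module.finrank ℂ L = n + h)
    (hconj : ∀ p ∈ L, cConjH n h p ∈ L → p = 0)
    (Lhat : Submodule ℂ (((Fin n → ℂ) × ((Fin h → ℂ) × ((Fin k → ℂ) × (Fin k → ℂ)))) ×
      ((Fin n → ℂ) × ((Fin h → ℂ) × ((Fin k → ℂ) × (Fin k → ℂ))))))
    (hLhat : ∀ p, p ∈ Lhat ↔ ∃ (X : Fin n → ℂ) (u : Fin h → ℂ)
      (α : Fin n → ℂ) (v : Fin h → ℂ) (w1 w2 s1 s2 : Fin k → ℝ),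
        ((X, u), (α, v)) ∈ L ∧
        p = ((X, (u, (fun j => (w1 j : ℂ) + Complex.I * w2 j,
                      fun j => (w2 j : ℂ) - Complex.I * w1 j))),
             (α, (v, (fun j => (s1 j : ℂ) + Complex.I * s2 j,
                      fun j => (s2 j : ℂ) - Complex.I * s1 j))))) :
    (∀ p ∈ Lhat, ∀ q ∈ Lhat, cPairingBig n h k p q = 0) ∧
    Module.finrank ℂ Lhat = n + h + 2 * k ∧
    (∀ p ∈ Lhat, cConjBig n h k p ∈ Lhat → p = 0) := by
  obtain rfl : Lhat = LinearMap.range (prolongOn L) :=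
    SetLike.ext (fun p => (hLhat p).trans (mem_range_prolongOn_iff L p).symm)
  refine ⟨?_, by rw [finrank_range_prolongOn, hrank], ?_⟩
  · rintro _ ⟨⟨x, a, b⟩, rfl⟩ _ ⟨⟨y, c, d⟩, rfl⟩
    rw [prolongOn_apply, prolongOn_apply, cPairingBig_prolong]
    exact hiso x x.2 y y.2
  · rintro _ ⟨⟨x, a, b⟩, rfl⟩ ⟨⟨y, c, d⟩, hxy⟩
    rw [prolongOn_apply, prolongOn_apply] at hxy
    obtain ⟨hconj_xy, rfl, rfl⟩ := eq_zero_of_cConjBig_prolong_eq _ _ a b c d hxy.symm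
    obtain rfl : x = 0 := Subtype.ext (hconj x x.2 (hconj_xy ▸ y.2))
    exact map_zero _
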